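/- arXiv:2410.14216 — 2 statements merged into one kernel-verified Lean document; each statement's English description precedes it below -/
import Mathlib

section
/- Let Fo > 0, θ_r ∈ ℝ, λ₀ > 0 with erfc(λ₀) ≠ 0, and define θ_right(t, x) = θ_r · (1 − erfc(x/(2√(t·Fo)))/erfc(λ₀)) for t > 0 and x ∈ ℝ, where erfc(x) = 1 − erf(x). Then θ_right satisfies the heat equation ∂_t θ_right(t, x) = Fo · ∂_xx θ_right(t, x) at every point (t, x) with t > 0. -/
/-- The error function `erf x = (2/√π) ∫₀ˣ e^{−s²} ds`. -/
noncomputable def erf (x : ℝ) : ℝ :=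
  (2 / Real.sqrt Real.pi) * ∫ s in (0:ℝ)..x, Real.exp (-s ^ 2)

/-- The complementary error function `erfc = 1 - erf`. -/
noncomputable def erfc (x : ℝ) : ℝ := 1 - erf x

/-- Liquid-phase branch of the exact self-similar Stefan solution. -/
noncomputable def thetaLeft (Fo θl lam0 t x : ℝ) : ℝ :=
  θl * (1 - erf (x / (2 * Real.sqrt (t * Fo))) / erf lam0)

/-- Solid-phase branch of the exact self-similar Stefan solution. -/
noncomputable def thetaRight (Fo θr lam0 t x : ℝ) : ℝ :=
  θr * (1 - erfc (x / (2 * Real.sqrt (t * Fo))) / erfc lam0)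

/-- The liquid–solid interface `λ(t) = 2lam0√(t·Fo)`. -/
noncomputable def interface (Fo lam0 t : ℝ) : ℝ := 2 * lam0 * Real.sqrt (t * Fo)

/-- The exact self-similar solution of the two-phase Stefan problem. -/
noncomputable def thetaEx (Fo θl θr lam0 t x : ℝ) : ℝ :=
  if x ≤ interface Fo lam0 t then thetaLeft Fo θl lam0 t x else thetaRight Fo θr lam0 t x

/-!
Every profile `f` solving `f'' = -2η f'` gives a solution `f (x / (2√(κt)))` of `∂ₜu = κ ∂ₓₓu`:
with `s = √(κt)`, both sides equal `-κ x f'(x / 2s) / (4 s³)`. The error function is such a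
profile, since `erf' = (2/√π) e^{-η²}`, and `θ_right` is an affine function of it.
-/

open Real

lemma hasDerivAt_erf (x : ℝ) : HasDerivAt erf (2 / √π * exp (-x ^ 2)) x := by
  have hc : Continuous fun s : ℝ => exp (-s ^ 2) := by fun_prop
  exact ((intervalIntegral.integral_hasStrictDerivAt_right (hc.intervalIntegrable 0 x)
    (hc.stronglyMeasurableAtFilter _ _) hc.continuousAt).hasDerivAt).const_mul (2 / √π)

lemma hasDerivAt_const_mul_exp_neg_sq (c η : ℝ) :
    HasDerivAt (fun η => c * exp (-η ^ 2)) (-2 * η * (c * exp (-η ^ 2))) η := by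
  have := ((hasDerivAt_pow 2 η).neg.exp).const_mul c
  simp only [Pi.neg_apply] at this
  refine this.congr_deriv ?_
  push_cast
  ring

lemma hasDerivAt_div_two_sqrt_mul {κ t : ℝ} (h : 0 < t * κ) (x : ℝ) :
    HasDerivAt (fun τ => x / (2 * √(τ * κ))) (-(x * κ) / (4 * √(t * κ) ^ 3)) t := by
  have hs : 0 < √(t * κ) := sqrt_pos.mpr h
  have hsqrt : HasDerivAt (fun τ => √(τ * κ)) (κ / (2 * √(t * κ))) t := by
    convert (hasDerivAt_mul_const κ).sqrt h.ne' using 1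
  have := ((hsqrt.const_mul 2).inv (by positivity)).const_mul x
  refine this.congr_deriv ?_
  field_simp
  ring

lemma deriv_comp_div_const {f f' : ℝ → ℝ} (hf : ∀ η, HasDerivAt f (f' η) η) (c : ℝ) :
    deriv (fun y => f (y / c)) = fun y => f' (y / c) / c := by
  ext y
  have := (hf (y / c)).comp y ((hasDerivAt_id y).div_const c)
  rw [Function.comp_def] at this
  simpa [div_eq_mul_inv, mul_comm] using this.deriv

lemma heat_of_similarity {f f' : ℝ → ℝ} (hf : ∀ η, HasDerivAt f (f' η) η)
    (hf' : ∀ η, HasDerivAt f' (-2 * η * f' η) η) {κ t : ℝ} (h : 0 < t * κ) (x : ℝ) :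
    deriv (fun τ => f (x / (2 * √(τ * κ)))) t =
      κ * deriv (deriv fun y => f (y / (2 * √(t * κ)))) x := by
  set s := √(t * κ)
  have hs : 0 < s := sqrt_pos.mpr h
  have htime := (hf _).comp t (hasDerivAt_div_two_sqrt_mul h x)
  have hspace := ((hf' (x / (2 * s))).comp x ((hasDerivAt_id x).div_const (2 * s))).div_const (2 * s)
  rw [Function.comp_def] at htime hspace
  simp only [id] at hspace
  rw [htime.deriv, deriv_comp_div_const hf, hspace.deriv]
  field_simp
  ring

lemma thetaRight_eq_add_mul_erf (Fo θr lam0 t x : ℝ) :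
    thetaRight Fo θr lam0 t x =
      θr - θr / erfc lam0 + θr / erfc lam0 * erf (x / (2 * √(t * Fo))) := by
  unfold thetaRight erfc
  ring

theorem thetaRight_heat_general (Fo θr lam0 : ℝ) (hFo : 0 < Fo) :
    ∀ t : ℝ, 0 < t → ∀ x : ℝ,
      deriv (fun τ => thetaRight Fo θr lam0 τ x) t =
        Fo * deriv (deriv (fun y => thetaRight Fo θr lam0 t y)) x := by
  intro t ht x
  simp only [thetaRight_eq_add_mul_erf, deriv_const_add', deriv_const_mul_field']
  rw [heat_of_similarity hasDerivAt_erf (hasDerivAt_const_mul_exp_neg_sq _) (mul_pos ht hFo)]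
  ring

/-- The solid branch `θ_right` satisfies the heat equation `∂_t θ = Fo ∂_xx θ` for `t > 0`. -/
theorem thetaRight_heat (Fo θr lam0 : ℝ) (hFo : 0 < Fo) (hlam0 : 0 < lam0) (herfc : erfc lam0 ≠ 0) :
    ∀ t : ℝ, 0 < t → ∀ x : ℝ,
      deriv (fun τ => thetaRight Fo θr lam0 τ x) t =
        Fo * deriv (deriv (fun y => thetaRight Fo θr lam0 t y)) x :=
  thetaRight_heat_general Fo θr lam0 hFo
end

section
/- Let Ste > 0, θ_l > 0 and θ_r ≤ 0. Then there exists a unique λ₀ > 0 satisfying λ₀ − (Ste/√π)·e^{−λ₀²}·(θ_r/erfc(λ₀) + θ_l/erf(λ₀)) = 0. -/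
open MeasureTheory Real Set


private lemma gauss_cont : Continuous fun s : ℝ => Real.exp (-s ^ 2) := by
  fun_prop

private lemma gauss_integrable : Integrable (fun s : ℝ => Real.exp (-s ^ 2)) := by
  have := integrable_exp_neg_mul_sq (one_pos (α := ℝ)); simpa using this

private lemma sqrt_pi_pos : 0 < Real.sqrt Real.pi := Real.sqrt_pos.2 Real.pi_pos

private lemma coef_pos : 0 < 2 / Real.sqrt Real.pi := by positivity

private lemma erf_strictMono : StrictMono erf := by
  intro a b hab
  unfold erf
  have hint : ∀ u v : ℝ, IntervalIntegrable (fun s => Real.exp (-s ^ 2)) volume u v :=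
    fun u v => gauss_cont.intervalIntegrable u v
  have key : (∫ s in (0:ℝ)..b, Real.exp (-s ^ 2)) - ∫ s in (0:ℝ)..a, Real.exp (-s ^ 2)
      = ∫ s in a..b, Real.exp (-s ^ 2) := by
    rw [intervalIntegral.integral_interval_sub_left (hint 0 b) (hint 0 a)]
  have hpos : 0 < ∫ s in a..b, Real.exp (-s ^ 2) :=
    intervalIntegral.intervalIntegral_pos_of_pos (hint a b) (fun x => Real.exp_pos _) hab
  nlinarith [coef_pos]

private lemma erf_zero : erf 0 = 0 := by simp [erf]

private lemma erf_pos {x : ℝ} (hx : 0 < x) : 0 < erf x := by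
  have := erf_strictMono hx; rwa [erf_zero] at this

/-- shift of Gaussian integral over `Ioi`. -/
private lemma gauss_shift (a : ℝ) :
    ∫ s in Ioi a, Real.exp (-s ^ 2) = ∫ u in Ioi (0:ℝ), Real.exp (-(u + a) ^ 2) := by
  have h := (measurePreserving_add_right volume a).setIntegral_preimage_emb
    (MeasurableEquiv.addRight a).measurableEmbedding (fun s => Real.exp (-s ^ 2)) (Ioi a)
  simpa using h.symm

private lemma gauss_Ioi_pos (a : ℝ) : 0 < ∫ s in Ioi a, Real.exp (-s ^ 2) := by
  refine (setIntegral_pos_iff_support_of_nonneg_ae ?_ ?_).2 ?_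
  · exact Filter.Eventually.of_forall fun x => (Real.exp_pos _).le
  · exact gauss_integrable.integrableOn
  · have : (Function.support fun s : ℝ => Real.exp (-s ^ 2)) = univ := by
      ext x; simp [Function.support, (Real.exp_pos _).ne']
    rw [this, univ_inter]
    simp [Real.volume_Ioi]

private lemma gauss_Ioi_zero : ∫ s in Ioi (0:ℝ), Real.exp (-s ^ 2) = Real.sqrt Real.pi / 2 := by
  have := integral_gaussian_Ioi (1 : ℝ)
  simpa using this

private lemma erfc_eq_integral {x : ℝ} (hx : 0 ≤ x) :
    erfc x = (2 / Real.sqrt Real.pi) * ∫ s in Ioi x, Real.exp (-s ^ 2) := by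
  have hsplit : (∫ s in Ioc (0:ℝ) x, Real.exp (-s ^ 2)) + ∫ s in Ioi x, Real.exp (-s ^ 2)
      = ∫ s in Ioi (0:ℝ), Real.exp (-s ^ 2) := by
    rw [← setIntegral_union (Ioc_disjoint_Ioi le_rfl) measurableSet_Ioi
      gauss_integrable.integrableOn gauss_integrable.integrableOn,
      Ioc_union_Ioi_eq_Ioi hx]
  have h0x : (∫ s in (0:ℝ)..x, Real.exp (-s ^ 2)) = ∫ s in Ioc (0:ℝ) x, Real.exp (-s ^ 2) :=
    intervalIntegral.integral_of_le hx
  have hpi : (2 / Real.sqrt Real.pi) * (Real.sqrt Real.pi / 2) = 1 := by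
    field_simp
  unfold erfc erf
  rw [h0x]
  have hone : (2 / Real.sqrt Real.pi) * ((∫ s in Ioc (0:ℝ) x, Real.exp (-s ^ 2))
      + ∫ s in Ioi x, Real.exp (-s ^ 2)) = 1 := by
    rw [hsplit, gauss_Ioi_zero]; exact hpi
  linear_combination (-1 : ℝ) * hone

private lemma erfc_pos {x : ℝ} (hx : 0 ≤ x) : 0 < erfc x := by
  rw [erfc_eq_integral hx]
  exact mul_pos coef_pos (gauss_Ioi_pos x)

private lemma erf_lt_one {x : ℝ} (hx : 0 ≤ x) : erf x < 1 := by
  have := erfc_pos hx; unfold erfc at this; linarith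

/-- `e^{-x²}/erfc x` is strictly increasing on positives. -/
private lemma ratio_erfc_strict {a b : ℝ} (ha : 0 < a) (hab : a < b) :
    Real.exp (-a ^ 2) / erfc a < Real.exp (-b ^ 2) / erfc b := by
  have hea : 0 < erfc a := erfc_pos ha.le
  have heb : 0 < erfc b := erfc_pos (ha.trans hab).le
  rw [div_lt_div_iff₀ hea heb]
  rw [erfc_eq_integral ha.le, erfc_eq_integral (ha.trans hab).le]
  have key : Real.exp (-a ^ 2) * ∫ s in Ioi b, Real.exp (-s ^ 2)
      < Real.exp (-b ^ 2) * ∫ s in Ioi a, Real.exp (-s ^ 2) := by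
    rw [gauss_shift a, gauss_shift b, ← integral_const_mul, ← integral_const_mul]
    have hintb : IntegrableOn (fun u : ℝ => Real.exp (-a ^ 2) * Real.exp (-(u + b) ^ 2))
        (Ioi 0) := ((gauss_integrable.comp_add_right b).const_mul _).integrableOn
    have hinta : IntegrableOn (fun u : ℝ => Real.exp (-b ^ 2) * Real.exp (-(u + a) ^ 2))
        (Ioi 0) := ((gauss_integrable.comp_add_right a).const_mul _).integrableOn
    have hfi : IntegrableOn (fun u : ℝ => Real.exp (-b ^ 2) * Real.exp (-(u + a) ^ 2)
        - Real.exp (-a ^ 2) * Real.exp (-(u + b) ^ 2)) (Ioi 0) := hinta.sub hintb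
    have hdiff : 0 < ∫ u in Ioi (0:ℝ),
        (Real.exp (-b ^ 2) * Real.exp (-(u + a) ^ 2)
          - Real.exp (-a ^ 2) * Real.exp (-(u + b) ^ 2)) := by
      refine (setIntegral_pos_iff_support_of_nonneg_ae ?_ hfi).2 ?_
      · rw [Filter.EventuallyLE, ae_restrict_iff' measurableSet_Ioi]
        refine Filter.Eventually.of_forall fun u hu => ?_
        have hu0 : 0 < u := hu
        have : -b ^ 2 + -(u + a) ^ 2 > -a ^ 2 + -(u + b) ^ 2 := by nlinarith
        have := Real.exp_lt_exp.2 this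
        rw [Real.exp_add, Real.exp_add] at this
        simp only [Pi.zero_apply]
        linarith
      · have hsub : Ioi (0:ℝ) ⊆ Function.support fun u =>
            Real.exp (-b ^ 2) * Real.exp (-(u + a) ^ 2)
              - Real.exp (-a ^ 2) * Real.exp (-(u + b) ^ 2) := by
          intro u hu
          have hu0 : 0 < u := hu
          have : -b ^ 2 + -(u + a) ^ 2 > -a ^ 2 + -(u + b) ^ 2 := by nlinarith
          have := Real.exp_lt_exp.2 this
          rw [Real.exp_add, Real.exp_add] at this
          simp only [Function.mem_support]
          intro h; rw [sub_eq_zero] at h; linarith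
        have : Ioi (0:ℝ) ∩ (Function.support fun u =>
            Real.exp (-b ^ 2) * Real.exp (-(u + a) ^ 2)
              - Real.exp (-a ^ 2) * Real.exp (-(u + b) ^ 2)) = Ioi 0 := by
          rw [inter_eq_left]; intro u hu
          exact hsub hu
        rw [Set.inter_comm] at this
        rw [this]
        simp [Real.volume_Ioi]
    rw [integral_sub hinta hintb] at hdiff
    linarith
  nlinarith [key, coef_pos]

private lemma erf_continuous : Continuous erf := by
  unfold erf
  exact continuous_const.mul (intervalIntegral.continuous_primitive
    (fun u v => gauss_cont.intervalIntegrable u v) 0)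

theorem test : True := trivial

private lemma erfc_antitone {x y : ℝ} (h : x < y) : erfc y < erfc x := by
  unfold erfc; have := erf_strictMono h; linarith

/-- Existence and uniqueness of the positive interface coefficient `λ₀` solving the
transcendental equation of the Stefan problem. -/
theorem stefan_lam0_exists_unique (Ste θl θr : ℝ) (hSte : 0 < Ste) (hθl : 0 < θl)
    (hθr : θr ≤ 0) :
    ∃! lam0 : ℝ, 0 < lam0 ∧
      lam0 - (Ste / Real.sqrt Real.pi) * Real.exp (-lam0 ^ 2) *
        (θr / erfc lam0 + θl / erf lam0) = 0 := by
  obtain ⟨C, hC⟩ : ∃ C : ℝ, C = Ste / Real.sqrt Real.pi := ⟨_, rfl⟩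
  have hCpos : 0 < C := hC ▸ div_pos hSte sqrt_pi_pos
  obtain ⟨F, hF⟩ : ∃ F : ℝ → ℝ,
      F = fun x => x - C * Real.exp (-x ^ 2) * (θr / erfc x + θl / erf x) := ⟨_, rfl⟩
  have hFval : ∀ x : ℝ, F x = x - C * Real.exp (-x ^ 2) * (θr / erfc x + θl / erf x) := by
    intro x; rw [hF]
  -- strict monotonicity on (0, ∞)
  have hmono : StrictMonoOn F (Ioi 0) := by
    intro a ha b hb hab
    have ha : (0:ℝ) < a := ha
    have hb : (0:ℝ) < b := hb
    have hea : 0 < erf a := erf_pos ha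
    have heb : 0 < erf b := erf_pos hb
    have hca : 0 < erfc a := erfc_pos ha.le
    have hcb : 0 < erfc b := erfc_pos hb.le
    have hk : Real.exp (-a ^ 2) / erfc a < Real.exp (-b ^ 2) / erfc b :=
      ratio_erfc_strict ha hab
    have hh : Real.exp (-b ^ 2) / erf b < Real.exp (-a ^ 2) / erf a := by
      rw [div_lt_div_iff₀ heb hea]
      have h1 : Real.exp (-b ^ 2) < Real.exp (-a ^ 2) := by
        apply Real.exp_lt_exp.2; nlinarith
      have h2 : erf a < erf b := erf_strictMono hab
      nlinarith [Real.exp_pos (-b ^ 2)]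
    have hFa : F a = a - C * θr * (Real.exp (-a ^ 2) / erfc a)
        - C * θl * (Real.exp (-a ^ 2) / erf a) := by rw [hFval]; ring
    have hFb : F b = b - C * θr * (Real.exp (-b ^ 2) / erfc b)
        - C * θl * (Real.exp (-b ^ 2) / erf b) := by rw [hFval]; ring
    rw [hFa, hFb]
    have hθr' : 0 ≤ C * (-θr) := mul_nonneg hCpos.le (by linarith)
    nlinarith [mul_le_mul_of_nonneg_left hk.le hθr',
      mul_lt_mul_of_pos_left hh (mul_pos hCpos hθl)]
  -- continuity
  have hFcont : ∀ x : ℝ, 0 < x → ContinuousAt F x := by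
    intro x hx
    have hexp : ContinuousAt (fun y : ℝ => Real.exp (-y ^ 2)) x := by fun_prop
    have herf : ContinuousAt erf x := erf_continuous.continuousAt
    have herfc : ContinuousAt erfc x := by
      unfold erfc; exact (continuous_const.sub erf_continuous).continuousAt
    have hne1 : erf x ≠ 0 := (erf_pos hx).ne'
    have hne2 : erfc x ≠ 0 := (erfc_pos hx.le).ne'
    rw [hF]
    exact continuousAt_id.sub ((continuousAt_const.mul hexp).mul
      ((continuousAt_const.div herfc hne2).add (continuousAt_const.div herf hne1)))
  -- upper endpoint
  have herf1 : 0 < erf 1 := erf_pos one_pos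
  have herfc1 : 0 < erfc 1 := erfc_pos (by norm_num)
  obtain ⟨b, hbdef⟩ : ∃ b : ℝ, b = 1 + C * θl / erf 1 := ⟨_, rfl⟩
  have hK : 0 < C * θl / erf 1 := div_pos (mul_pos hCpos hθl) herf1
  have hb1 : 1 ≤ b := by rw [hbdef]; linarith
  have hbpos : 0 < b := by linarith
  have hFb : 0 < F b := by
    have hcb : 0 < erfc b := erfc_pos hbpos.le
    have heb : 0 < erf b := erf_pos hbpos
    have hexple : Real.exp (-b ^ 2) ≤ 1 := by
      rw [← Real.exp_zero]; apply Real.exp_le_exp.2; nlinarith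
    have herf1b : erf 1 ≤ erf b := by
      rcases eq_or_lt_of_le hb1 with h | h
      · rw [h]
      · exact (erf_strictMono h).le
    have ht1 : 0 ≤ -(C * Real.exp (-b ^ 2) * (θr / erfc b)) := by
      have h0 : θr / erfc b ≤ 0 := div_nonpos_of_nonpos_of_nonneg hθr hcb.le
      nlinarith [mul_pos hCpos (Real.exp_pos (-b ^ 2))]
    have ht2 : C * Real.exp (-b ^ 2) * (θl / erf b) ≤ C * θl / erf 1 := by
      have h1 : θl / erf b ≤ θl / erf 1 :=
        div_le_div_of_nonneg_left hθl.le herf1 herf1b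
      have h3 : 0 < θl / erf b := div_pos hθl heb
      calc C * Real.exp (-b ^ 2) * (θl / erf b) ≤ C * (θl / erf b) :=
            mul_le_mul_of_nonneg_right (mul_le_of_le_one_right hCpos.le hexple) h3.le
        _ ≤ C * (θl / erf 1) := mul_le_mul_of_nonneg_left h1 hCpos.le
        _ = C * θl / erf 1 := by ring
    have hFbeq : F b = b - C * Real.exp (-b ^ 2) * (θr / erfc b)
        - C * Real.exp (-b ^ 2) * (θl / erf b) := by rw [hFval]; ring
    rw [hFbeq]
    linarith
  -- lower endpoint
  obtain ⟨M, hMdef⟩ : ∃ M : ℝ, M = C * (-θr) / erfc 1 := ⟨_, rfl⟩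
  have hM : 0 ≤ M := hMdef ▸ div_nonneg (mul_nonneg hCpos.le (by linarith)) herfc1.le
  obtain ⟨ε, hεdef⟩ : ∃ ε : ℝ, ε = C * Real.exp (-1) * θl / (2 + M) := ⟨_, rfl⟩
  have hεpos : 0 < ε := by
    rw [hεdef]
    apply div_pos (mul_pos (mul_pos hCpos (Real.exp_pos _)) hθl); linarith
  obtain ⟨δ, hδpos, hδ⟩ := Metric.continuousAt_iff.1 erf_continuous.continuousAt ε hεpos
  obtain ⟨a, hadef⟩ : ∃ a : ℝ, a = min (δ / 2) (2⁻¹ : ℝ) := ⟨_, rfl⟩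
  have hapos : 0 < a := hadef ▸ lt_min (by linarith) (by norm_num)
  have hahalf : a ≤ 2⁻¹ := hadef ▸ min_le_right _ _
  have ha1 : a < 1 := lt_of_le_of_lt hahalf (by norm_num)
  have herfa : erf a < ε := by
    have hda : dist a 0 < δ := by
      rw [Real.dist_eq, sub_zero, abs_of_pos hapos]
      calc a ≤ δ / 2 := hadef ▸ min_le_left _ _
        _ < δ := by linarith
    have h := hδ hda
    rw [Real.dist_eq, erf_zero, sub_zero] at h
    calc erf a ≤ |erf a| := le_abs_self _
      _ < ε := h
  have hFa : F a < 0 := by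
    have hea : 0 < erf a := erf_pos hapos
    have hca : 0 < erfc a := erfc_pos hapos.le
    have hexple : Real.exp (-a ^ 2) ≤ 1 := by
      rw [← Real.exp_zero]; apply Real.exp_le_exp.2; nlinarith
    have hexpge : Real.exp (-1 : ℝ) ≤ Real.exp (-a ^ 2) := by
      apply Real.exp_le_exp.2; nlinarith
    have herfc1a : erfc 1 ≤ erfc a := (erfc_antitone ha1).le
    -- bound on the θr term
    have ht1 : -(C * Real.exp (-a ^ 2) * (θr / erfc a)) ≤ M := by
      have h1 : (-θr) / erfc a ≤ (-θr) / erfc 1 :=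
        div_le_div_of_nonneg_left (by linarith) herfc1 herfc1a
      have h2 : 0 ≤ (-θr) / erfc a := div_nonneg (by linarith) hca.le
      have heq : -(C * Real.exp (-a ^ 2) * (θr / erfc a))
          = C * Real.exp (-a ^ 2) * ((-θr) / erfc a) := by ring
      rw [heq, hMdef]
      calc C * Real.exp (-a ^ 2) * ((-θr) / erfc a)
          ≤ C * ((-θr) / erfc a) :=
            mul_le_mul_of_nonneg_right (mul_le_of_le_one_right hCpos.le hexple) h2
        _ ≤ C * ((-θr) / erfc 1) := mul_le_mul_of_nonneg_left h1 hCpos.le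
        _ = C * (-θr) / erfc 1 := by ring
    -- bound on the θl term
    have ht2 : 2 + M < C * Real.exp (-a ^ 2) * (θl / erf a) := by
      have h1 : θl / ε < θl / erf a := div_lt_div_of_pos_left hθl hea herfa
      have h2M : (0:ℝ) < 2 + M := by linarith
      have h2 : C * Real.exp (-1) * (θl / ε) = 2 + M := by
        rw [hεdef]; field_simp
      have h3 : 0 < θl / ε := div_pos hθl hεpos
      calc 2 + M = C * Real.exp (-1) * (θl / ε) := h2.symm
        _ < C * Real.exp (-1) * (θl / erf a) :=
            mul_lt_mul_of_pos_left h1 (mul_pos hCpos (Real.exp_pos _))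
        _ ≤ C * Real.exp (-a ^ 2) * (θl / erf a) :=
            mul_le_mul_of_nonneg_right (mul_le_mul_of_nonneg_left hexpge hCpos.le)
              (div_pos hθl hea).le
    have hdistrib : C * Real.exp (-a ^ 2) * (θr / erfc a + θl / erf a)
        = C * Real.exp (-a ^ 2) * (θr / erfc a)
          + C * Real.exp (-a ^ 2) * (θl / erf a) := by ring
    rw [hFval, hdistrib]
    linarith
  -- intermediate value theorem
  have hab : a < b := lt_of_lt_of_le ha1 hb1
  have hcontOn : ContinuousOn F (Icc a b) := fun x hx =>
    (hFcont x (lt_of_lt_of_le hapos hx.1)).continuousWithinAt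
  have h0mem : (0:ℝ) ∈ Icc (F a) (F b) := ⟨hFa.le, hFb.le⟩
  obtain ⟨c, hcmem, hc⟩ := intermediate_value_Icc hab.le hcontOn h0mem
  have hcpos : 0 < c := lt_of_lt_of_le hapos hcmem.1
  have hceq : c - (Ste / Real.sqrt Real.pi) * Real.exp (-c ^ 2) *
      (θr / erfc c + θl / erf c) = 0 := by
    rw [← hC, ← hFval c]; exact hc
  refine ⟨c, ⟨hcpos, hceq⟩, ?_⟩
  rintro y ⟨hy, hyeq⟩
  have hyF : F y = 0 := by rw [hFval, hC]; exact hyeq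
  exact hmono.injOn (mem_Ioi.2 hy) (mem_Ioi.2 hcpos) (by rw [hyF, hc])
end
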